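/- Fix K/a > 0 and i ∈ {1,…,n_0}. If the equilibrium v^σ of the reduced Kuramoto system associated with σ ∈ Σ_{n_0} having σ_i = −1 and σ_{2n_0−i+1} = 1 exists (i.e., the corresponding consistency equation for Ĉ^σ has a solution), then so does the equilibrium v^σ̄ associated with the sequence σ̄ defined by σ̄_i = 1, σ̄_{2n_0−i+1} = −1 and σ̄_j = σ_j for j ∉ {i, 2n_0−i+1}, and vice versa; moreover the corresponding constants satisfy Ĉ^σ = Ĉ^σ̄. -/
import Mathlib


open Real Set Filter

/-- coefficient of the natural frequency of the `i`-th oscillator (0-indexed) in the reduced system: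
`i - n0` for `i < n0` (paper's `i - n0 - 1`, 1-indexed) and `i - n0 + 1` otherwise. -/
noncomputable def redCoeff (n0 : ℕ) (i : Fin (2 * n0)) : ℝ :=
  if (i : ℕ) < n0 then (i : ℕ) - (n0 : ℝ) else (i : ℕ) - (n0 : ℝ) + 1

/-- right-hand side of the reduced Kuramoto system on `𝕋^{2 n0}` (with `n = 2 n0 + 1`, `ν = a/n`). -/
noncomputable def redField (n0 : ℕ) (a K : ℝ) (v : Fin (2 * n0) → ℝ) (i : Fin (2 * n0)) : ℝ :=
  redCoeff n0 i * (a / (2 * (n0 : ℝ) + 1)) -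
    (K / (2 * (n0 : ℝ) + 1)) *
      (2 * Real.sin (v i) +
        ∑ j ∈ Finset.univ.erase i, (Real.sin (v j) - Real.sin (v j - v i)))

/-- the function `χ^σ`. -/
noncomputable def chi (n0 : ℕ) (σ : Fin (2 * n0) → ℝ) (ξ : ℝ) : ℝ :=
  (ξ / n0) * (1 + ∑ i, σ i * Real.sqrt (1 - (redCoeff n0 i * ξ / n0) ^ 2))

/-- the function `h^σ`. -/
noncomputable def hSigma (n0 : ℕ) (σ : Fin (2 * n0) → ℝ) (ξ : ℝ) : ℝ :=
  (1 / n0) * ∑ i, σ i * (redCoeff n0 i / n0) ^ 2 /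
    Real.sqrt (1 - (redCoeff n0 i * ξ / n0) ^ 2)

/-- the consistency equation for `Ĉ^σ`. -/
def ConsistentC (n0 : ℕ) (a K : ℝ) (σ : Fin (2 * n0) → ℝ) (C : ℝ) : Prop :=
  C ≠ 0 ∧
  (∀ i, |redCoeff n0 i * a / ((2 * (n0 : ℝ) + 1) * K * C)| ≤ 1) ∧
  C = (1 / (2 * (n0 : ℝ) + 1)) *
    (1 + ∑ i, σ i * Real.sqrt (1 - (redCoeff n0 i * a / ((2 * (n0 : ℝ) + 1) * K * C)) ^ 2))

/-- the angles `φ_i = arcsin((i−n0−1)a/(nKĈ))` resp. `arcsin((i−n0)a/(nKĈ))`. -/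
noncomputable def phiC (n0 : ℕ) (a K C : ℝ) (i : Fin (2 * n0)) : ℝ :=
  Real.arcsin (redCoeff n0 i * a / ((2 * (n0 : ℝ) + 1) * K * C))

/-- the angles `φ_i = ± ξ`-parametrized version. -/
noncomputable def phiXi (n0 : ℕ) (s ξ : ℝ) (i : Fin (2 * n0)) : ℝ :=
  s * Real.arcsin (redCoeff n0 i * ξ / n0)

/-- the point `v^σ` built from signs `σ` and angles `φ`. -/
noncomputable def vSigma (n0 : ℕ) (σ : Fin (2 * n0) → ℝ) (φ : Fin (2 * n0) → ℝ)
    (i : Fin (2 * n0)) : ℝ :=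
  if σ i = 1 then φ i else if 0 < φ i then π - φ i else -φ i - π

/-- `v` is a solution of the reduced Kuramoto system. -/
def IsRedSol (n0 : ℕ) (a K : ℝ) (v : ℝ → Fin (2 * n0) → ℝ) : Prop :=
  ∀ t : ℝ, ∀ i, HasDerivAt (fun s => v s i) (redField n0 a K (v t) i) t

/-- Lyapunov stability of an equilibrium of the reduced Kuramoto system. -/
def RedStable (n0 : ℕ) (a K : ℝ) (vstar : Fin (2 * n0) → ℝ) : Prop :=
  ∀ ε > 0, ∃ δ > 0, ∀ v : ℝ → Fin (2 * n0) → ℝ, IsRedSol n0 a K v →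
    dist (v 0) vstar < δ → ∀ t ≥ 0, dist (v t) vstar < ε

/-- asymptotic stability of an equilibrium of the reduced Kuramoto system. -/
def RedAsympStable (n0 : ℕ) (a K : ℝ) (vstar : Fin (2 * n0) → ℝ) : Prop :=
  RedStable n0 a K vstar ∧
  ∃ δ > 0, ∀ v : ℝ → Fin (2 * n0) → ℝ, IsRedSol n0 a K v →
    dist (v 0) vstar < δ → Tendsto (fun t => v t) atTop (nhds vstar)

/-- Fix `K/a > 0` and `i ∈ {1,…,n_0}`. The consistency equation for `σ`
(with `σ_i = −1`, `σ_{2n_0−i+1} = 1`) has a solution `Ĉ` if and only if the consistency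
equation for `σ̄` (with the two signs swapped, all others equal) has the same solution;
in particular the corresponding equilibria exist simultaneously and `Ĉ^σ = Ĉ^σ̄`. -/
theorem stmt8 (n0 : ℕ) (hn0 : 1 < n0) (a K : ℝ) (ha : 0 < a) (hK : 0 < K)
    (i : Fin (2 * n0)) (hi : (i : ℕ) < n0)
    (σ : Fin (2 * n0) → ℝ) (hσ : ∀ j, σ j = 1 ∨ σ j = -1)
    (hσi : σ i = -1) (hσi' : σ ⟨2 * n0 - 1 - (i : ℕ), by omega⟩ = 1)
    (σb : Fin (2 * n0) → ℝ)
    (hσbi : σb i = 1) (hσbi' : σb ⟨2 * n0 - 1 - (i : ℕ), by omega⟩ = -1)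
    (hσbj : ∀ j : Fin (2 * n0), j ≠ i → j ≠ ⟨2 * n0 - 1 - (i : ℕ), by omega⟩ → σb j = σ j)
    (C : ℝ) :
    ConsistentC n0 a K σ C ↔ ConsistentC n0 a K σb C := by
  have hpf : 2 * n0 - 1 - (i : ℕ) < 2 * n0 := by omega
  set i' : Fin (2 * n0) := ⟨2 * n0 - 1 - (i : ℕ), hpf⟩ with hi'def
  have hne : i ≠ i' := by
    intro h
    have := congrArg Fin.val h
    simp [hi'def] at this
    omega
  have hcoeff : redCoeff n0 i' = - redCoeff n0 i := by
    simp only [redCoeff, hi'def]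
    have h1 : ¬ (2 * n0 - 1 - (i : ℕ) < n0) := by omega
    rw [if_pos hi, if_neg h1]
    have : ((2 * n0 - 1 - (i : ℕ) : ℕ) : ℝ) = 2 * n0 - 1 - (i : ℕ) := by
      push_cast [Nat.cast_sub (by omega : (i:ℕ) ≤ 2*n0-1), Nat.cast_sub (by omega : 1 ≤ 2*n0)]
      ring
    rw [this]; ring
  have key : ∀ f : Fin (2 * n0) → ℝ, f i = f i' →
      ∑ j, σ j * f j = ∑ j, σb j * f j := by
    intro f hf
    have hz : ∑ j, (σ j * f j - σb j * f j) = 0 := by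
      rw [← Finset.sum_subset (Finset.subset_univ ({i, i'} : Finset (Fin (2 * n0))))]
      · rw [Finset.sum_pair hne, hσi, hσbi]
        have h1 : σ i' = 1 := hσi'
        have h2 : σb i' = -1 := hσbi'
        rw [h1, h2, hf]; ring
      · intro j _ hj
        simp only [Finset.mem_insert, Finset.mem_singleton, not_or] at hj
        rw [hσbj j hj.1 hj.2]; ring
    rw [Finset.sum_sub_distrib] at hz
    linarith
  have hfi : Real.sqrt (1 - (redCoeff n0 i * a / ((2 * (n0 : ℝ) + 1) * K * C)) ^ 2)
      = Real.sqrt (1 - (redCoeff n0 i' * a / ((2 * (n0 : ℝ) + 1) * K * C)) ^ 2) := by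
    rw [hcoeff]; ring_nf
  constructor
  · rintro ⟨h1, h2, h3⟩
    exact ⟨h1, h2, by rw [← key _ hfi]; exact h3⟩
  · rintro ⟨h1, h2, h3⟩
    exact ⟨h1, h2, by rw [key _ hfi]; exact h3⟩
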